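/- For every n ≥ 2, ML^W(K_{n,n}) = 2n − 2: the balanced complete bipartite graph K_{n,n} admits an irregularising walk of length 2n − 2, and every irregularising walk of K_{n,n} has length at least 2n − 2. -/

import Mathlib

open SimpleGraph Finset

variable {V : Type*}

/-- `W.inc u` is the number of edge-traversals of the walk `W` incident to `u`. -/
def SimpleGraph.Walk.inc [DecidableEq V] {G : SimpleGraph V} {a b : V}
    (W : G.Walk a b) (u : V) : ℕ :=
  (W.edges.filter (fun e => u ∈ e)).length

/-- A walk `W` of `G` is irregularising if in the multigraph `G + W` no two
adjacent vertices have the same degree. -/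
def SimpleGraph.Walk.Irregularising [Fintype V] [DecidableEq V] {G : SimpleGraph V}
    [DecidableRel G.Adj] {a b : V} (W : G.Walk a b) : Prop :=
  ∀ ⦃u v : V⦄, G.Adj u v → G.degree u + W.inc u ≠ G.degree v + W.inc v

/-- The vertex sum `σ_ℓ(u)` of a labelling. -/
def vertexSum [Fintype V] [DecidableEq V] (G : SimpleGraph V) [DecidableRel G.Adj]
    (ℓ : Sym2 V → ℕ) (u : V) : ℕ :=
  ∑ w ∈ G.neighborFinset u, ℓ s(u, w)

/-- A labelling is proper if adjacent vertices get distinct sums. -/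
def IsProperLabelling [Fintype V] [DecidableEq V] (G : SimpleGraph V) [DecidableRel G.Adj]
    (ℓ : Sym2 V → ℕ) : Prop :=
  ∀ ⦃u v : V⦄, G.Adj u v → vertexSum G ℓ u ≠ vertexSum G ℓ v

/-- Minimum length of an irregularising walk, as an extended natural number. -/
noncomputable def MLW [Fintype V] [DecidableEq V] (G : SimpleGraph V) [DecidableRel G.Adj] : ℕ∞ :=
  ⨅ (a : V) (b : V) (W : G.Walk a b) (_ : W.Irregularising), (W.length : ℕ∞)

/-- Infimum over irregularising walks of the maximum number of traversals of a single edge. -/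
noncomputable def MEW [Fintype V] [DecidableEq V] (G : SimpleGraph V) [DecidableRel G.Adj] : ℕ∞ :=
  ⨅ (a : V) (b : V) (W : G.Walk a b) (_ : W.Irregularising),
    ((W.edges.toFinset.sup fun e => W.edges.count e : ℕ) : ℕ∞)

/-- Infimum over irregularising walks of `max_u inc_W(u)`. -/
noncomputable def MVW [Fintype V] [DecidableEq V] (G : SimpleGraph V) [DecidableRel G.Adj] : ℕ∞ :=
  ⨅ (a : V) (b : V) (W : G.Walk a b) (_ : W.Irregularising),
    ((Finset.univ.sup fun u => W.inc u : ℕ) : ℕ∞)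

instance {α β : Type*} : DecidableRel (completeBipartiteGraph α β).Adj := fun _ _ =>
  inferInstanceAs (Decidable (_ ∨ _))


/-!
In `K_{n,n}` all degrees are equal, so a walk is irregularising iff no left vertex meets as many
traversals as a right vertex. Hence on one side every vertex meets a traversal. Each traversal has
exactly one end on that side, so the length is the sum of `inc` over it, and since `inc` is even
away from the two ends of the walk this sum is at least `2n - 2`. Conversely, the walk
`r₀ ℓ₀ r₁ ℓ₀ ⋯ ℓ₀ rₙ₋₁` through a single hub `ℓ₀` has length `2n - 2` and `inc` values
`2n - 2, 0` on the left and `1, 2` on the right (with `2` only for `n ≥ 3`).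
-/

namespace SimpleGraph.Walk

variable {G : SimpleGraph V} [DecidableEq V]

@[simp]
lemma inc_nil {a : V} (u : V) : (nil : G.Walk a a).inc u = 0 := rfl

lemma inc_cons {a c b : V} (h : G.Adj a c) (p : G.Walk c b) (u : V) :
    (cons h p).inc u = (if u ∈ s(a, c) then 1 else 0) + p.inc u := by
  unfold inc
  rw [edges_cons, List.filter_cons]
  split_ifs <;> simp_all [add_comm]

lemma inc_append {a c b : V} (p : G.Walk a c) (q : G.Walk c b) (u : V) :
    (p.append q).inc u = p.inc u + q.inc u := by
  simp [inc, edges_append, List.filter_append]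

theorem even_inc_iff {a b : V} (W : G.Walk a b) (u : V) :
    Even (W.inc u) ↔ (u = a ↔ u = b) := by
  induction W with
  | nil => simp
  | @cons a c b h p ih =>
    simp only [inc_cons, Sym2.mem_iff]
    by_cases hua : u = a
    · subst hua
      simp only [h.ne, true_or, if_true] at ih ⊢
      rw [add_comm, Nat.even_add_one, ih]
      tauto
    · by_cases huc : u = c
      · subst huc
        simp only [hua, or_true, if_true]
        rw [add_comm, Nat.even_add_one, ih]
        tauto
      · simpa [hua, huc] using ih

theorem sum_inc_eq_length {S : Finset V} {t : Set V} (hG : G.IsBipartiteWith S t)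
    {a b : V} (W : G.Walk a b) : ∑ v ∈ S, W.inc v = W.length := by
  induction W with
  | nil => simp
  | @cons a c b h p ih =>
    simp only [inc_cons, sum_add_distrib, ih, length_cons, Sym2.mem_iff, add_comm _ 1]
    congr 1
    rcases hG.mem_of_adj h with ⟨ha, hc⟩ | ⟨ha, hc⟩
    · rw [Finset.mem_coe] at ha
      have hc' : c ∉ S := Set.disjoint_right.mp hG.disjoint hc
      rw [sum_congr rfl fun v hv => if_congr (or_iff_left (ne_of_mem_of_not_mem hv hc'))
        rfl rfl, sum_ite_eq' S a, if_pos ha]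
    · rw [Finset.mem_coe] at hc
      have ha' : a ∉ S := Set.disjoint_right.mp hG.disjoint ha
      rw [sum_congr rfl fun v hv => if_congr (or_iff_right (ne_of_mem_of_not_mem hv ha'))
        rfl rfl, sum_ite_eq' S c, if_pos hc]

theorem two_mul_card_sub_two_le_length {S : Finset V} {t : Set V}
    (hG : G.IsBipartiteWith S t) {a b : V} (W : G.Walk a b) (hS : ∀ v ∈ S, W.inc v ≠ 0) :
    2 * #S - 2 ≤ W.length := by
  have hle : 2 * #S ≤ W.length + 2 :=
    calc 2 * #S = ∑ _v ∈ S, 2 := by rw [sum_const, smul_eq_mul, mul_comm]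
      _ ≤ ∑ v ∈ S, (W.inc v + ((if v = a then 1 else 0) + (if v = b then 1 else 0))) := by
        refine sum_le_sum fun v hv => ?_
        have heven := (W.even_inc_iff v).mpr
        have hpos := hS v hv
        split_ifs with hva hvb <;> grind
      _ = W.length + ((if a ∈ S then 1 else 0) + (if b ∈ S then 1 else 0)) := by
        rw [sum_add_distrib, sum_add_distrib, sum_ite_eq', sum_ite_eq', W.sum_inc_eq_length hG]
      _ ≤ W.length + 2 := by split_ifs <;> omega
  omega

end SimpleGraph.Walk

section CompleteBipartite

variable {α β : Type*} [Fintype α] [Fintype β]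

lemma completeBipartiteGraph_isBipartiteWith :
    (completeBipartiteGraph α β).IsBipartiteWith
      ↑(univ.map (Function.Embedding.inl : α ↪ α ⊕ β))
      ↑(univ.map (Function.Embedding.inr : β ↪ α ⊕ β)) where
  disjoint := by
    rw [Finset.disjoint_coe, Finset.disjoint_left]
    simp
  mem_of_adj := by
    rintro (x | x) (y | y) <;> simp

lemma completeBipartiteGraph_degree_inl (x : α) :
    (completeBipartiteGraph α β).degree (.inl x) = Fintype.card β := by
  rw [← card_neighborFinset_eq_degree,
    show (completeBipartiteGraph α β).neighborFinset (.inl x) =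
      univ.map Function.Embedding.inr by ext (y | y) <;> simp]
  simp

lemma completeBipartiteGraph_degree_inr (y : β) :
    (completeBipartiteGraph α β).degree (.inr y) = Fintype.card α := by
  rw [← card_neighborFinset_eq_degree,
    show (completeBipartiteGraph α β).neighborFinset (.inr y) =
      univ.map Function.Embedding.inl by ext (x | x) <;> simp]
  simp

variable [DecidableEq α]

lemma irregularising_completeBipartiteGraph_iff {a b : α ⊕ α}
    (W : (completeBipartiteGraph α α).Walk a b) :
    W.Irregularising ↔ ∀ x y, W.inc (.inl x) ≠ W.inc (.inr y) := by
  constructor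
  · intro h x y hxy
    exact h (by simp : (completeBipartiteGraph α α).Adj (.inl x) (.inr y))
      (by rw [completeBipartiteGraph_degree_inl, completeBipartiteGraph_degree_inr, hxy])
  · rintro h (x | x) (y | y) hxy
    · simp at hxy
    · simpa [completeBipartiteGraph_degree_inl, completeBipartiteGraph_degree_inr] using h x y
    · simpa [completeBipartiteGraph_degree_inl, completeBipartiteGraph_degree_inr, eq_comm]
        using h y x
    · simp at hxy

theorem two_mul_card_sub_two_le_length_of_irregularising {a b : α ⊕ α}
    (W : (completeBipartiteGraph α α).Walk a b) (hW : W.Irregularising) :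
    2 * Fintype.card α - 2 ≤ W.length := by
  rw [irregularising_completeBipartiteGraph_iff] at hW
  by_cases h : ∃ x, W.inc (.inl x) = 0
  · obtain ⟨x, hx⟩ := h
    simpa using W.two_mul_card_sub_two_le_length completeBipartiteGraph_isBipartiteWith.symm
      (by simpa [← hx] using fun y => (hW x y).symm)
  · simp only [not_exists] at h
    simpa using W.two_mul_card_sub_two_le_length completeBipartiteGraph_isBipartiteWith
      (by simpa using h)

end CompleteBipartite

section HubWalk

variable {β : Type*} {n : ℕ} (c : β) (hn : 0 < n)

/-- The walk `r₀ c r₁ c r₂ ⋯ c rₖ` in `K_{β,n}`, where `rᵢ = inr i`. -/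
def hubWalk : (k : ℕ) → (hk : k < n) →
    (completeBipartiteGraph β (Fin n)).Walk (.inr ⟨0, hn⟩) (.inr ⟨k, hk⟩)
  | 0, _ => .nil
  | k + 1, hk =>
    (hubWalk k (Nat.lt_of_succ_lt hk)).append
      (.cons (by simp : (completeBipartiteGraph β (Fin n)).Adj (.inr ⟨k, _⟩) (.inl c))
        (.cons (by simp : (completeBipartiteGraph β (Fin n)).Adj (.inl c) (.inr ⟨k + 1, hk⟩))
          .nil))

lemma length_hubWalk (k : ℕ) (hk : k < n) : (hubWalk c hn k hk).length = 2 * k := by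
  induction k with
  | zero => rfl
  | succ k ih =>
    simp only [hubWalk, Walk.length_append, Walk.length_cons, Walk.length_nil, ih]
    ring

variable [DecidableEq β]

lemma inc_hubWalk_inl (k : ℕ) (hk : k < n) (x : β) :
    (hubWalk c hn k hk).inc (.inl x) = if x = c then 2 * k else 0 := by
  induction k with
  | zero => simp [hubWalk]
  | succ k ih =>
    simp only [hubWalk, Walk.inc_append, Walk.inc_cons, Walk.inc_nil,
      ih (Nat.lt_of_succ_lt hk), Sym2.mem_iff, Sum.inl.injEq, reduceCtorEq, or_false, false_or]
    split_ifs <;> omega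

lemma inc_hubWalk_inr (k : ℕ) (hk : k < n) (y : Fin n) :
    (hubWalk c hn k hk).inc (.inr y) =
      (if y.val < k then 1 else 0) + (if 0 < y.val ∧ y.val ≤ k then 1 else 0) := by
  induction k with
  | zero => simp [hubWalk, Nat.pos_iff_ne_zero]
  | succ k ih =>
    simp only [hubWalk, Walk.inc_append, Walk.inc_cons, Walk.inc_nil,
      ih (Nat.lt_of_succ_lt hk), Sym2.mem_iff, Sum.inr.injEq, reduceCtorEq, or_false, false_or,
      Fin.ext_iff]
    split_ifs <;> omega

end HubWalk

theorem irregularising_hubWalk {n : ℕ} (hn : 2 ≤ n) :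
    (hubWalk (n := n) (⟨0, by omega⟩ : Fin n) (by omega) (n - 1) (by omega)).Irregularising := by
  rw [irregularising_completeBipartiteGraph_iff]
  intro x y
  rw [inc_hubWalk_inl, inc_hubWalk_inr]
  have := y.isLt
  split_ifs <;> omega

/-- for `n ≥ 2`, `ML^W(K_{n,n}) = 2n - 2`: the balanced complete bipartite
graph `K_{n,n}` admits an irregularising walk of length `2n - 2`, and every
irregularising walk of it has length at least `2n - 2`. -/
theorem stmt_15 (n : ℕ) (hn : 2 ≤ n) :
    (∃ (a b : Fin n ⊕ Fin n) (W : (completeBipartiteGraph (Fin n) (Fin n)).Walk a b),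
        W.Irregularising ∧ W.length = 2 * n - 2) ∧
      (∀ (a b : Fin n ⊕ Fin n) (W : (completeBipartiteGraph (Fin n) (Fin n)).Walk a b),
        W.Irregularising → 2 * n - 2 ≤ W.length) := by
  refine ⟨⟨_, _, _, irregularising_hubWalk hn, ?_⟩, fun a b W hW => ?_⟩
  · rw [length_hubWalk]
    omega
  · simpa using two_mul_card_sub_two_le_length_of_irregularising W hW
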